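/- Let (R,M) be a discrete valuation domain with finite residue field and valuation v, let S ⊆ R be a finite nonempty set, and let f = ∏_{s∈S}(x−s)^{h_s} with positive integers h_s. Let S' ⊆ S be a balanced set associated to S, let A be the partition matrix of C_S indexed by S', for t ∈ S' put m_t = Σ_{s ∈ S_t} h_s, and let d_f be a generator of the fixed divisor of f. Then the following are equivalent: (i) Posh(f) equals the rich set of S; (ii) v(f(r)) = v(d_f) for every r in an S-poor neighborhood of C_S; (iii) v(f(r)) takes the same value for all r in S-poor neighborhoods of C_S; (iv) the column vector (m_t)_{t∈S'} is a solution of A·x = v(d_f)·(1,…,1)^T. -/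

import Mathlib

open Polynomial

section Defs

variable (R K : Type*)

/-- `Int(R) = {F ∈ K[x] ∣ F(R) ⊆ R}`, the ring of integer-valued polynomials,
as a subring of `K[x]`. -/
def intPoly [CommRing R] [CommRing K] [Algebra R K] : Subring (Polynomial K) where
  carrier := {F | ∀ r : R, ∃ a : R, F.eval (algebraMap R K r) = algebraMap R K a}
  mul_mem' := by
    rintro f g hf hg r
    obtain ⟨a, ha⟩ := hf r
    obtain ⟨b, hb⟩ := hg r
    exact ⟨a * b, by simp [ha, hb]⟩
  one_mem' := fun r => ⟨1, by simp⟩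
  add_mem' := by
    rintro f g hf hg r
    obtain ⟨a, ha⟩ := hf r
    obtain ⟨b, hb⟩ := hg r
    exact ⟨a + b, by simp [ha, hb]⟩
  zero_mem' := fun r => ⟨0, by simp⟩
  neg_mem' := by
    rintro f hf r
    obtain ⟨a, ha⟩ := hf r
    exact ⟨-a, by simp [ha]⟩

/-- Polynomials with coefficients in `R` are integer-valued. -/
theorem map_mem_intPoly [CommRing R] [CommRing K] [Algebra R K] (f : Polynomial R) :
    f.map (algebraMap R K) ∈ intPoly R K :=
  fun r => ⟨f.eval r, by rw [Polynomial.eval_map, Polynomial.eval₂_at_apply]⟩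

/-- An element `d` of a commutative monoid is absolutely irreducible if it is irreducible
and, for every `n ≥ 1`, the only factorization of `d ^ n` into irreducibles is, up to order
and unit factors, `d ⋯ d` (`n` copies). -/
def AbsolutelyIrreducible {α : Type*} [CommMonoid α] (d : α) : Prop :=
  Irreducible d ∧ ∀ n : ℕ, 1 ≤ n → ∀ l : Multiset α, (∀ a ∈ l, Irreducible a) →
    l.prod = d ^ n → Multiset.card l = n ∧ ∀ a ∈ l, Associated a d

/-- The fixed divisor of a polynomial `f ∈ R[x]`: the ideal of `R` generated by the
values of `f` on `R`. -/
def fixDiv [CommRing R] (f : Polynomial R) : Ideal R :=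
  Ideal.span (Set.range fun a => f.eval a)

/-- The fixed divisor of an integer-valued polynomial `F ∈ Int(R)`: the ideal of `R`
generated by (the elements of `R` representing) the values of `F` on `R`. -/
def fixDivK [CommRing R] [CommRing K] [Algebra R K] (F : Polynomial K) : Ideal R :=
  Ideal.span {a : R | ∃ r : R, F.eval (algebraMap R K r) = algebraMap R K a}

/-- The (normalized additive) valuation of a nonzero element of a discrete valuation
ring: the largest `n` such that `x ∈ M ^ n`, where `M` is the maximal ideal. -/
noncomputable def mval [CommRing R] [IsLocalRing R] (x : R) : ℕ :=
  sSup {n : ℕ | x ∈ IsLocalRing.maximalIdeal R ^ n}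

open scoped Classical in
/-- The valuation `v : R → ℕ∞`, with `v 0 = ⊤`. -/
noncomputable def vR [CommRing R] [IsLocalRing R] (x : R) : ℕ∞ :=
  if x = 0 then ⊤ else (mval R x : ℕ∞)

open scoped Classical in
/-- The valuation extended to the quotient field `K`, with `v 0 = ⊤`. -/
noncomputable def vK [CommRing R] [IsLocalRing R] [CommRing K] [Algebra R K]
    [IsLocalization (nonZeroDivisors R) K] (x : K) : WithTop ℤ :=
  if x = 0 then ⊤
  else (((mval R (IsLocalization.sec (nonZeroDivisors R) x).1 : ℤ) -
        (mval R ((IsLocalization.sec (nonZeroDivisors R) x).2 : R) : ℤ) : ℤ) : WithTop ℤ)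

/-- The residue class `s + M ^ n` of `s` modulo the `n`-th power of the maximal ideal. -/
def resClass [CommRing R] [IsLocalRing R] (s : R) (n : ℕ) : Set R :=
  {x | x - s ∈ IsLocalRing.maximalIdeal R ^ n}

/-- A finite set `S ⊆ R` is balanced if, letting `n s` for each `s ∈ S` be the minimal
non-negative integer with `(s + M ^ (n s)) ∩ S = {s}`, the residue classes `s + M ^ (n s)`
(`s ∈ S`) are pairwise disjoint and cover `R`. -/
def IsBalanced [CommRing R] [IsLocalRing R] (S : Finset R) : Prop :=
  S.Nonempty ∧
  ∃ n : R → ℕ,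
    (∀ s ∈ S, resClass R s (n s) ∩ (S : Set R) = {s} ∧
      ∀ k : ℕ, resClass R s k ∩ (S : Set R) = {s} → n s ≤ k) ∧
    (∀ s ∈ S, ∀ t ∈ S, s ≠ t → Disjoint (resClass R s (n s)) (resClass R t (n t))) ∧
    (⋃ s ∈ S, resClass R s (n s)) = Set.univ

/-- `ρ` describes the `M`-adic partition `C_S` associated to `S`: the partition of `R`
into the residue classes `s + M ^ (ρ s)`, `s ∈ S`, such that each block contains both a
residue class of `M ^ (ρ s + 1)` intersecting `S` and one disjoint from `S`. -/
def IsSPartition [CommRing R] [IsLocalRing R] (S : Finset R) (ρ : R → ℕ) : Prop :=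
  (⋃ s ∈ S, resClass R s (ρ s)) = Set.univ ∧
  (∀ s ∈ S, ∀ t ∈ S,
    resClass R s (ρ s) = resClass R t (ρ t) ∨
      Disjoint (resClass R s (ρ s)) (resClass R t (ρ t))) ∧
  (∀ s ∈ S,
    (∃ u : R, resClass R u (ρ s + 1) ⊆ resClass R s (ρ s) ∧
      (resClass R u (ρ s + 1) ∩ (S : Set R)).Nonempty) ∧
    (∃ u : R, resClass R u (ρ s + 1) ⊆ resClass R s (ρ s) ∧
      resClass R u (ρ s + 1) ∩ (S : Set R) = ∅))

/-- `S'` is a balanced set associated to `S` (relative to the partition data `ρ` of `C_S`):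
`S' ⊆ S` is balanced, consists of one representative per block of `C_S`, and its associated
partition `C_{S'}` coincides with `C_S`. -/
def IsAssociatedBalancedSubset [CommRing R] [IsLocalRing R] (S S' : Finset R) (ρ : R → ℕ) :
    Prop :=
  S' ⊆ S ∧ IsBalanced R S' ∧
  (∀ s ∈ S', ∀ t ∈ S', s ≠ t → Disjoint (resClass R s (ρ s)) (resClass R t (ρ t))) ∧
  (⋃ s ∈ S', resClass R s (ρ s)) = Set.univ

open scoped Classical in
/-- The partition matrix of the partition `{s + M ^ (ρ s) : s ∈ S}`: diagonal entries
`ρ s`, off-diagonal entries `v (s - t)`. -/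
noncomputable def partitionMatrix [CommRing R] [IsLocalRing R] (S : Finset R) (ρ : R → ℕ) :
    Matrix {x // x ∈ S} {x // x ∈ S} ℤ :=
  Matrix.of fun s t =>
    if (s : R) = (t : R) then (ρ (s : R) : ℤ) else (mval R ((s : R) - (t : R)) : ℤ)

/-- `m` is the vector of multiplicities of the equalizing polynomial of `S`: the unique
vector of positive integers with gcd `1` such that `A · m = e · (1, …, 1)ᵀ` for some
non-negative integer `e`, where `A` is the partition matrix. -/
def IsEqualizingVector [CommRing R] [IsLocalRing R] (S : Finset R) (ρ : R → ℕ) (m : R → ℕ) :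
    Prop :=
  (∀ s ∈ S, 0 < m s) ∧ S.gcd m = 1 ∧
  ∃ e : ℕ, ∀ s : {x // x ∈ S},
    (∑ t : {x // x ∈ S}, partitionMatrix R S ρ s t * (m (t : R) : ℤ)) = (e : ℤ)

/-- `f` is the equalizing polynomial of `S`. -/
def IsEqualizingPoly [CommRing R] [IsLocalRing R] (S : Finset R) (f : Polynomial R) : Prop :=
  ∃ (ρ : R → ℕ) (m : R → ℕ), IsSPartition R S ρ ∧ IsEqualizingVector R S ρ m ∧
    f = ∏ s ∈ S, (Polynomial.X - Polynomial.C s) ^ m s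

/-- The posh set of `f ∈ R[x]`: the set of `r ∈ R` where `v (f r)` exceeds
`min_{t ∈ R} v (f t)`. -/
noncomputable def poshR [CommRing R] [IsLocalRing R] (f : Polynomial R) : Set R :=
  {r : R | (⨅ t : R, vR R (f.eval t)) < vR R (f.eval r)}

/-- The posh set of `F ∈ K[x]`: the set of `r ∈ R` where `v (F r)` exceeds
`min_{t ∈ R} v (F t)`. -/
def poshK [CommRing R] [IsLocalRing R] [CommRing K] [Algebra R K]
    [IsLocalization (nonZeroDivisors R) K] (F : Polynomial K) : Set R :=
  {r : R | ∃ t : R, vK R K (F.eval (algebraMap R K t)) < vK R K (F.eval (algebraMap R K r))}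

/-- `r` lies in an `S`-poor neighborhood of the partition `C_S` (described by `ρ`):
a residue class `r + M ^ (ρ s + 1)` disjoint from `S` inside a block `s + M ^ (ρ s)`. -/
def IsPoorElt [CommRing R] [IsLocalRing R] (S : Finset R) (ρ : R → ℕ) (r : R) : Prop :=
  ∃ s ∈ S, r ∈ resClass R s (ρ s) ∧ resClass R r (ρ s + 1) ∩ (S : Set R) = ∅

/-- The rich set of `S`: the union of the `S`-rich neighborhoods `s + M ^ (ρ s + 1)`,
`s ∈ S`. -/
def richSet [CommRing R] [IsLocalRing R] (S : Finset R) (ρ : R → ℕ) : Set R :=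
  ⋃ s ∈ S, resClass R s (ρ s + 1)

/-- `a` is an `M`-ordering (`P`-ordering) of `R`. -/
def IsMOrdering [CommRing R] [IsLocalRing R] (a : ℕ → R) : Prop :=
  ∀ k : ℕ, ∀ x : R,
    vR R (∏ i ∈ Finset.range k, (a k - a i)) ≤ vR R (∏ i ∈ Finset.range k, (x - a i))

end Defs

/-!
For `r` in the block of `t ∈ S'` and `s ∈ S` lying in the block of `u ∈ S'`, the ultrametric
inequality gives `min (v (r - s)) (ρ s) = A t u`, so `v (r - s) ≥ A t u` with equality unless
`r ∈ s + M ^ (ρ s + 1)`. Summing with the weights `h s`, `v (f r)` equals `(A · m)_t` when `r` is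
`S`-poor and exceeds it when `r` is `S`-rich. Every block contains an `S`-poor point, so the
minimum of `v ∘ f`, which is `v d_f`, is `min_t (A · m)_t`, and each of (i)–(iv) says that `v ∘ f`
attains this minimum at every `S`-poor point.
-/

open Polynomial IsDiscreteValuationRing

theorem ENat.natCast_mul_lt_natCast_mul {n a : ℕ} {b : ℕ∞} (hn : 0 < n) (hab : (a : ℕ∞) < b) :
    (n : ℕ∞) * a < n * b := by
  induction b using ENat.recTopCoe with
  | top => simpa [ENat.mul_top (Nat.cast_ne_zero.2 hn.ne')] using ENat.natCast_lt_top (n * a)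
  | coe b => exact_mod_cast Nat.mul_lt_mul_of_pos_left (Nat.cast_lt.1 hab) hn

theorem ENat.sum_lt_sum_of_ne_top {ι : Type*} {s : Finset ι} {f g : ι → ℕ∞}
    (hf : ∀ i ∈ s, f i ≠ ⊤) (hle : ∀ i ∈ s, f i ≤ g i) (hlt : ∃ i ∈ s, f i < g i) :
    ∑ i ∈ s, f i < ∑ i ∈ s, g i := by
  classical
  obtain ⟨i, hi, hfg⟩ := hlt
  rw [← Finset.add_sum_erase s f hi, ← Finset.add_sum_erase s g hi]
  have hrest : ∑ j ∈ s.erase i, f j ≠ ⊤ :=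
    (ENat.sum_lt_top.2 fun j hj => (hf j (Finset.mem_of_mem_erase hj)).lt_top).ne
  calc f i + ∑ j ∈ s.erase i, f j < g i + ∑ j ∈ s.erase i, f j :=
        (ENat.add_lt_add_iff_right hrest).2 hfg
    _ ≤ g i + ∑ j ∈ s.erase i, g j :=
        add_le_add le_rfl (Finset.sum_le_sum fun j hj => hle j (Finset.mem_of_mem_erase hj))

section Valuation

variable {R : Type*} [CommRing R] [IsDomain R] [IsDiscreteValuationRing R]

theorem mem_maximalIdeal_pow_iff_le_addVal {x : R} {n : ℕ} :
    x ∈ IsLocalRing.maximalIdeal R ^ n ↔ (n : ℕ∞) ≤ addVal R x := by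
  obtain ⟨ϖ, hϖ⟩ := exists_irreducible R
  rw [hϖ.maximalIdeal_eq, Ideal.span_singleton_pow, Ideal.mem_span_singleton,
    ← addVal_le_iff_dvd, hϖ.addVal_pow]

theorem addVal_eq_mval {x : R} (hx : x ≠ 0) : addVal R x = mval R x := by
  obtain ⟨k, hk⟩ := WithTop.ne_top_iff_exists.1 fun h => hx (addVal_eq_top_iff.1 h)
  have hset : {n : ℕ | x ∈ IsLocalRing.maximalIdeal R ^ n} = Set.Iic k := by
    ext n
    simp only [Set.mem_ofPred_eq, mem_maximalIdeal_pow_iff_le_addVal, ← hk, Set.mem_Iic]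
    exact Nat.cast_le
  rw [mval, hset, csSup_Iic, ← hk]
  rfl

theorem vR_eq_addVal (x : R) : vR R x = addVal R x := by
  unfold vR
  split_ifs with hx
  · rw [hx, addVal_zero]
  · rw [addVal_eq_mval hx]

theorem addVal_prod {ι : Type*} (s : Finset ι) (g : ι → R) :
    addVal R (∏ i ∈ s, g i) = ∑ i ∈ s, addVal R (g i) := by
  classical
  induction s using Finset.induction with
  | empty => simp
  | insert a s ha ih => rw [Finset.prod_insert ha, Finset.sum_insert ha, addVal_mul, ih]

theorem addVal_eval_prod_X_sub_C_pow (S : Finset R) (h : R → ℕ) (r : R) :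
    addVal R ((∏ s ∈ S, (X - C s) ^ h s).eval r) = ∑ s ∈ S, (h s : ℕ∞) * addVal R (r - s) := by
  simp only [eval_prod, eval_pow, eval_sub, eval_X, eval_C, addVal_prod, addVal_pow,
    nsmul_eq_mul]

theorem addVal_eq_iInf_of_fixDiv_eq_span {f : R[X]} {d : R}
    (hd : fixDiv R f = Ideal.span {d}) : addVal R d = ⨅ r, addVal R (f.eval r) := by
  obtain ⟨r₀, hr₀⟩ := ciInf_mem fun r => addVal R (f.eval r)
  have hmin : fixDiv R f = Ideal.span {f.eval r₀} := by
    refine le_antisymm (Ideal.span_le.2 ?_) (Ideal.span_le.2 ?_)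
    · rintro _ ⟨r, rfl⟩
      exact Ideal.mem_span_singleton.2 (addVal_le_iff_dvd.1 (hr₀.trans_le (iInf_le _ r)))
    · exact Set.singleton_subset_iff.2 (Ideal.subset_span ⟨r₀, rfl⟩)
  rw [← hr₀, addVal_eq_iff_associated, ← Ideal.span_singleton_eq_span_singleton, ← hd, hmin]

end Valuation

section ResidueClass

variable {R : Type*} [CommRing R] [IsDomain R] [IsDiscreteValuationRing R]

theorem mem_resClass_iff {r s : R} {n : ℕ} :
    r ∈ resClass R s n ↔ (n : ℕ∞) ≤ addVal R (r - s) :=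
  mem_maximalIdeal_pow_iff_le_addVal

theorem mem_resClass_self (s : R) (n : ℕ) : s ∈ resClass R s n := by
  simp [mem_resClass_iff]

theorem mem_resClass_comm {r s : R} {n : ℕ} : r ∈ resClass R s n ↔ s ∈ resClass R r n := by
  rw [mem_resClass_iff, mem_resClass_iff, AddValuation.map_sub_swap]

theorem resClass_subset_of_le {s : R} {m n : ℕ} (hmn : m ≤ n) :
    resClass R s n ⊆ resClass R s m :=
  fun _ hx => mem_resClass_iff.2 ((Nat.cast_le.2 hmn).trans (mem_resClass_iff.1 hx))

theorem resClass_eq_of_mem {r s : R} {n : ℕ} (h : r ∈ resClass R s n) :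
    resClass R r n = resClass R s n := by
  ext x
  change x - r ∈ IsLocalRing.maximalIdeal R ^ n ↔ x - s ∈ IsLocalRing.maximalIdeal R ^ n
  rw [show x - r = (x - s) - (r - s) by ring]
  exact Submodule.sub_mem_iff_left _ h

theorem le_of_resClass_subset {s t : R} {a b : ℕ} (h : resClass R s a ⊆ resClass R t b) :
    b ≤ a := by
  obtain ⟨ϖ, hϖ⟩ := exists_irreducible R
  have hmem : s + ϖ ^ a ∈ resClass R t b := h (by simp [mem_resClass_iff, hϖ.addVal_pow])
  rw [← resClass_eq_of_mem (h (mem_resClass_self s a)), mem_resClass_iff, add_sub_cancel_left,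
    hϖ.addVal_pow] at hmem
  exact_mod_cast hmem

theorem eq_of_resClass_eq {s t : R} {a b : ℕ} (h : resClass R s a = resClass R t b) : a = b :=
  le_antisymm (le_of_resClass_subset h.superset) (le_of_resClass_subset h.subset)

theorem addVal_sub_lt_of_disjoint {s t : R} {a b : ℕ}
    (h : Disjoint (resClass R s a) (resClass R t b)) : addVal R (s - t) < b := by
  by_contra! hle
  exact Set.disjoint_left.1 h (mem_resClass_self s a) (mem_resClass_iff.2 hle)

theorem addVal_sub_eq_of_disjoint {s t r u : R} {a b : ℕ}
    (h : Disjoint (resClass R s a) (resClass R t b)) (hr : r ∈ resClass R s a)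
    (hu : u ∈ resClass R t b) : addVal R (r - u) = addVal R (s - t) := by
  have hlt : addVal R (s - t) < min (a : ℕ∞) b := by
    refine lt_min ?_ (addVal_sub_lt_of_disjoint h)
    rw [AddValuation.map_sub_swap]
    exact addVal_sub_lt_of_disjoint h.symm
  rw [show r - u = (s - t) + ((r - s) - (u - t)) by ring]
  exact AddValuation.map_add_eq_of_lt_left _ (hlt.trans_le (AddValuation.map_le_sub _
    ((min_le_left _ _).trans (mem_resClass_iff.1 hr))
    ((min_le_right _ _).trans (mem_resClass_iff.1 hu))))

end ResidueClass

section Partition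

variable {R : Type*} [CommRing R] [IsDomain R] [IsDiscreteValuationRing R]
  {S S' : Finset R} {ρ : R → ℕ}

/-- The element of `S'` whose block `t + M ^ (ρ t)` contains `r`. -/
noncomputable def block (S' : Finset R) (ρ : R → ℕ) (r : R) : R :=
  Classical.epsilon fun t => t ∈ S' ∧ r ∈ resClass R t (ρ t)

theorem block_spec (hS' : IsAssociatedBalancedSubset R S S' ρ) (r : R) :
    block S' ρ r ∈ S' ∧ r ∈ resClass R (block S' ρ r) (ρ (block S' ρ r)) := by
  refine Classical.epsilon_spec (p := fun t => t ∈ S' ∧ r ∈ resClass R t (ρ t)) ?_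
  simpa using (Set.eq_univ_iff_forall.1 hS'.2.2.2 r)

theorem block_eq_of_mem (hS' : IsAssociatedBalancedSubset R S S' ρ) {r t : R} (ht : t ∈ S')
    (hr : r ∈ resClass R t (ρ t)) : block S' ρ r = t := by
  by_contra hne
  obtain ⟨hb, hrb⟩ := block_spec hS' r
  exact Set.disjoint_left.1 (hS'.2.2.1 _ hb t ht hne) hrb hr

theorem resClass_block (hρ : IsSPartition R S ρ) (hS' : IsAssociatedBalancedSubset R S S' ρ)
    {s : R} (hs : s ∈ S) :
    resClass R (block S' ρ s) (ρ (block S' ρ s)) = resClass R s (ρ s) := by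
  obtain ⟨hb, hsb⟩ := block_spec hS' s
  refine (hρ.2.1 _ (hS'.1 hb) s hs).resolve_right fun hdisj => ?_
  exact Set.disjoint_left.1 hdisj hsb (mem_resClass_self s (ρ s))

theorem rho_block (hρ : IsSPartition R S ρ) (hS' : IsAssociatedBalancedSubset R S S' ρ)
    {s : R} (hs : s ∈ S) : ρ (block S' ρ s) = ρ s :=
  eq_of_resClass_eq (resClass_block hρ hS' hs)

theorem mem_resClass_iff_block_eq (hρ : IsSPartition R S ρ)
    (hS' : IsAssociatedBalancedSubset R S S' ρ) {r s : R} (hs : s ∈ S) :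
    r ∈ resClass R s (ρ s) ↔ block S' ρ r = block S' ρ s := by
  rw [← resClass_block hρ hS' hs]
  refine ⟨block_eq_of_mem hS' (block_spec hS' s).1, fun he => ?_⟩
  rw [← he]
  exact (block_spec hS' r).2

theorem isPoorElt_iff_notMem_richSet (hρ : IsSPartition R S ρ)
    (hS' : IsAssociatedBalancedSubset R S S' ρ) {r : R} :
    IsPoorElt R S ρ r ↔ r ∉ richSet R S ρ := by
  simp only [richSet, Set.mem_iUnion₂, not_exists]
  constructor
  · rintro ⟨s₀, hs₀, hrs₀, hpoor⟩ s hs hrs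
    have hblock : block S' ρ s = block S' ρ s₀ := by
      rw [← (mem_resClass_iff_block_eq hρ hS' hs).1 (resClass_subset_of_le (Nat.le_succ _) hrs),
        (mem_resClass_iff_block_eq hρ hS' hs₀).1 hrs₀]
    have hρs : ρ s = ρ s₀ := by rw [← rho_block hρ hS' hs, hblock, rho_block hρ hS' hs₀]
    have hsr : s ∈ resClass R r (ρ s₀ + 1) ∩ S := ⟨hρs ▸ mem_resClass_comm.1 hrs, hs⟩
    rwa [hpoor] at hsr
  · intro hrich
    obtain ⟨hb, hrb⟩ := block_spec hS' r
    refine ⟨block S' ρ r, hS'.1 hb, hrb, Set.eq_empty_of_forall_notMem ?_⟩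
    rintro s ⟨hsr, hs⟩
    have hsb : s ∈ resClass R (block S' ρ r) (ρ (block S' ρ r)) :=
      resClass_eq_of_mem hrb ▸ resClass_subset_of_le (Nat.le_succ _) hsr
    have hρs : ρ s = ρ (block S' ρ r) := by
      rw [← rho_block hρ hS' hs, block_eq_of_mem hS' hb hsb]
    exact hrich s hs (hρs ▸ mem_resClass_comm.1 hsr)

open scoped Classical in
noncomputable def partitionEntry (ρ : R → ℕ) (t u : R) : ℕ :=
  if t = u then ρ t else mval R (t - u)

theorem partitionEntry_block (hρ : IsSPartition R S ρ)
    (hS' : IsAssociatedBalancedSubset R S S' ρ) {s : R} (hs : s ∈ S) (r : R) :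
    (partitionEntry ρ (block S' ρ r) (block S' ρ s) : ℕ∞) = min (addVal R (r - s)) (ρ s) := by
  by_cases hb : block S' ρ r = block S' ρ s
  · rw [partitionEntry, if_pos hb, hb, rho_block hρ hS' hs, min_eq_right]
    exact mem_resClass_iff.1 ((mem_resClass_iff_block_eq hρ hS' hs).2 hb)
  · have hdisj := hS'.2.2.1 _ (block_spec hS' r).1 _ (block_spec hS' s).1 hb
    have hval := addVal_sub_eq_of_disjoint hdisj (block_spec hS' r).2 (block_spec hS' s).2
    rw [partitionEntry, if_neg hb, ← addVal_eq_mval (sub_ne_zero.2 hb), ← hval, min_eq_left]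
    rw [← rho_block hρ hS' hs, hval]
    exact (addVal_sub_lt_of_disjoint hdisj).le

end Partition

section PoorValue

variable {R : Type*} [CommRing R] [IsDomain R] [IsDiscreteValuationRing R]
  {S S' : Finset R} {ρ h : R → ℕ}

/-- `(A · m)_t`, regrouped as a sum over `S` (`partitionMatrix_mulVec_eq_poorValue`): the
valuation of `f` at the `S`-poor points of the block of `t`. -/
noncomputable def poorValue (S S' : Finset R) (ρ h : R → ℕ) (t : R) : ℕ :=
  ∑ s ∈ S, h s * partitionEntry ρ t (block S' ρ s)

theorem poorValue_block_le_addVal_eval (hρ : IsSPartition R S ρ)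
    (hS' : IsAssociatedBalancedSubset R S S' ρ) (r : R) :
    (poorValue S S' ρ h (block S' ρ r) : ℕ∞) ≤
      addVal R ((∏ s ∈ S, (X - C s) ^ h s).eval r) := by
  rw [addVal_eval_prod_X_sub_C_pow, poorValue]
  push_cast
  gcongr with s hs
  rw [partitionEntry_block hρ hS' hs]
  exact min_le_left _ _

theorem addVal_eval_eq_poorValue_of_notMem_richSet (hρ : IsSPartition R S ρ)
    (hS' : IsAssociatedBalancedSubset R S S' ρ) {r : R} (hr : r ∉ richSet R S ρ) :
    addVal R ((∏ s ∈ S, (X - C s) ^ h s).eval r) = poorValue S S' ρ h (block S' ρ r) := by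
  rw [addVal_eval_prod_X_sub_C_pow, poorValue]
  push_cast
  refine Finset.sum_congr rfl fun s hs => ?_
  have hrs : ¬ ((ρ s + 1 : ℕ) : ℕ∞) ≤ addVal R (r - s) :=
    fun hle => hr (Set.mem_biUnion hs (mem_resClass_iff.2 hle))
  rw [partitionEntry_block hρ hS' hs, min_eq_left]
  push_cast at hrs
  exact (ENat.lt_add_one_iff (ENat.natCast_ne_top _)).1 (not_le.1 hrs)

theorem poorValue_block_lt_addVal_eval (hρ : IsSPartition R S ρ)
    (hS' : IsAssociatedBalancedSubset R S S' ρ) (hh : ∀ s ∈ S, 0 < h s) {r : R}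
    (hr : r ∈ richSet R S ρ) :
    (poorValue S S' ρ h (block S' ρ r) : ℕ∞) <
      addVal R ((∏ s ∈ S, (X - C s) ^ h s).eval r) := by
  obtain ⟨s₀, hs₀, hrs₀⟩ := Set.mem_iUnion₂.1 hr
  rw [addVal_eval_prod_X_sub_C_pow, poorValue]
  push_cast
  refine ENat.sum_lt_sum_of_ne_top (fun s _ => ?_) (fun s hs => ?_) ⟨s₀, hs₀, ?_⟩
  · exact_mod_cast ENat.natCast_ne_top _
  · gcongr
    rw [partitionEntry_block hρ hS' hs]
    exact min_le_left _ _
  · have hlt : ((ρ s₀ : ℕ) : ℕ∞) < addVal R (r - s₀) :=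
      (ENat.add_one_le_iff (ENat.natCast_ne_top _)).1 (by exact_mod_cast mem_resClass_iff.1 hrs₀)
    rw [partitionEntry_block hρ hS' hs₀, min_eq_right hlt.le]
    exact ENat.natCast_mul_lt_natCast_mul (hh s₀ hs₀) hlt

theorem addVal_eval_eq_poorValue_of_isPoorElt (hρ : IsSPartition R S ρ)
    (hS' : IsAssociatedBalancedSubset R S S' ρ) {r : R} (hr : IsPoorElt R S ρ r) :
    addVal R ((∏ s ∈ S, (X - C s) ^ h s).eval r) = poorValue S S' ρ h (block S' ρ r) :=
  addVal_eval_eq_poorValue_of_notMem_richSet hρ hS' ((isPoorElt_iff_notMem_richSet hρ hS').1 hr)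

theorem exists_isPoorElt_addVal_eval_eq_poorValue (hρ : IsSPartition R S ρ)
    (hS' : IsAssociatedBalancedSubset R S S' ρ) {t : R} (ht : t ∈ S') :
    ∃ r, IsPoorElt R S ρ r ∧
      addVal R ((∏ s ∈ S, (X - C s) ^ h s).eval r) = poorValue S S' ρ h t := by
  obtain ⟨-, u, hsub, hdisj⟩ := hρ.2.2 t (hS'.1 ht)
  have hu : u ∈ resClass R t (ρ t) := hsub (mem_resClass_self u _)
  have hpoor : IsPoorElt R S ρ u := ⟨t, hS'.1 ht, hu, hdisj⟩
  exact ⟨u, hpoor, by rw [addVal_eval_eq_poorValue_of_isPoorElt hρ hS' hpoor,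
    block_eq_of_mem hS' ht hu]⟩

theorem exists_isPoorElt_addVal_eval_eq_iInf (hρ : IsSPartition R S ρ)
    (hS' : IsAssociatedBalancedSubset R S S' ρ) :
    ∃ r, IsPoorElt R S ρ r ∧ addVal R ((∏ s ∈ S, (X - C s) ^ h s).eval r) =
      ⨅ r', addVal R ((∏ s ∈ S, (X - C s) ^ h s).eval r') := by
  obtain ⟨r₀, hr₀⟩ := ciInf_mem fun r => addVal R ((∏ s ∈ S, (X - C s) ^ h s).eval r)
  obtain ⟨r, hr, hval⟩ :=
    exists_isPoorElt_addVal_eval_eq_poorValue (h := h) hρ hS' (block_spec hS' r₀).1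
  refine ⟨r, hr, le_antisymm ?_ (iInf_le _ r)⟩
  rw [hval, ← hr₀]
  exact poorValue_block_le_addVal_eval hρ hS' r₀

theorem poshR_eq_richSet_iff (hρ : IsSPartition R S ρ)
    (hS' : IsAssociatedBalancedSubset R S S' ρ) (hh : ∀ s ∈ S, 0 < h s) :
    poshR R (∏ s ∈ S, (X - C s) ^ h s) = richSet R S ρ ↔
      ∀ r, IsPoorElt R S ρ r → addVal R ((∏ s ∈ S, (X - C s) ^ h s).eval r) =
        ⨅ r', addVal R ((∏ s ∈ S, (X - C s) ^ h s).eval r') := by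
  simp only [poshR, vR_eq_addVal]
  refine ⟨fun hposh r hr => ?_, fun hpoor => ?_⟩
  · have hr' : r ∉ {r | _ < _} := hposh ▸ (isPoorElt_iff_notMem_richSet hρ hS').1 hr
    exact le_antisymm (not_lt.1 hr') (iInf_le _ r)
  ext r
  rw [Set.mem_ofPred_eq]
  refine ⟨fun hlt => by_contra fun hrich => ?_, fun hrich => ?_⟩
  · exact hlt.ne' (hpoor r ((isPoorElt_iff_notMem_richSet hρ hS').2 hrich))
  obtain ⟨r₁, hr₁, hval₁⟩ :=
    exists_isPoorElt_addVal_eval_eq_poorValue (h := h) hρ hS' (block_spec hS' r).1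
  calc ⨅ r', addVal R ((∏ s ∈ S, (X - C s) ^ h s).eval r') = _ := (hpoor r₁ hr₁).symm
    _ = _ := hval₁
    _ < _ := poorValue_block_lt_addVal_eval hρ hS' hh hrich

theorem partitionMatrix_mulVec_eq_poorValue (hρ : IsSPartition R S ρ)
    (hS' : IsAssociatedBalancedSubset R S S' ρ) {m : R → ℕ}
    (hm : ∀ t ∈ S',
      m t = ∑ᶠ s ∈ {s : R | s ∈ S ∧ resClass R s (ρ s) = resClass R t (ρ t)}, h s)
    (t : {x // x ∈ S'}) :
    ∑ u : {x // x ∈ S'}, partitionMatrix R S' ρ t u * (m (u : R) : ℤ) =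
      poorValue S S' ρ h t := by
  classical
  have hm' : ∀ u ∈ S', m u = ∑ s ∈ S with block S' ρ s = u, h s := by
    intro u hu
    rw [hm u hu, ← finsum_mem_coe_finset, Finset.coe_filter]
    congr! 3 with s
    refine and_congr_right fun hs => ⟨fun he => ?_, fun he => ?_⟩
    · exact block_eq_of_mem hS' hu (he ▸ mem_resClass_self s (ρ s))
    · rw [← he, resClass_block hρ hS' hs]
  have hentry : ∀ u : {x // x ∈ S'}, partitionMatrix R S' ρ t u = partitionEntry ρ t u := by
    intro u
    unfold partitionMatrix partitionEntry
    split_ifs <;> simp_all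
  simp_rw [hentry]
  rw [Finset.sum_coe_sort S' fun u => (partitionEntry ρ (t : R) u : ℤ) * m u, poorValue,
    ← Finset.sum_fiberwise_of_maps_to (s := S) (t := S') fun s _ => (block_spec hS' s).1]
  push_cast
  refine Finset.sum_congr rfl fun u hu => ?_
  rw [hm' u hu, Nat.cast_sum, Finset.mul_sum]
  refine Finset.sum_congr rfl fun s hs => ?_
  rw [(Finset.mem_filter.1 hs).2, mul_comm]

end PoorValue

theorem statement14_general (R : Type*) [CommRing R] [IsDomain R] [IsDiscreteValuationRing R]
    (S : Finset R) (h : R → ℕ) (hh : ∀ s ∈ S, 0 < h s)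
    (f : Polynomial R) (hfdef : f = ∏ s ∈ S, (Polynomial.X - Polynomial.C s) ^ h s)
    (ρ : R → ℕ) (hρ : IsSPartition R S ρ)
    (S' : Finset R) (hS' : IsAssociatedBalancedSubset R S S' ρ)
    (m : R → ℕ)
    (hm : ∀ t ∈ S',
      m t = ∑ᶠ s ∈ {s : R | s ∈ S ∧ resClass R s (ρ s) = resClass R t (ρ t)}, h s)
    (df : R) (hdf : fixDiv R f = Ideal.span {df}) :
    List.TFAE [
      poshR R f = richSet R S ρ,
      ∀ r : R, IsPoorElt R S ρ r → vR R (f.eval r) = vR R df,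
      ∀ r r' : R, IsPoorElt R S ρ r → IsPoorElt R S ρ r' →
        vR R (f.eval r) = vR R (f.eval r'),
      ∀ t : {x // x ∈ S'},
        (∑ u : {x // x ∈ S'}, partitionMatrix R S' ρ t u * (m (u : R) : ℤ)) =
          (mval R df : ℤ)] := by
  have hdf_iInf := addVal_eq_iInf_of_fixDiv_eq_span hdf
  subst hfdef
  obtain ⟨r₀, hr₀, hval₀⟩ := exists_isPoorElt_addVal_eval_eq_iInf (h := h) hρ hS'
  have hdf_mval : addVal R df = mval R df := by
    refine addVal_eq_mval fun hzero => ?_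
    rw [hzero, addVal_zero, ← hval₀, addVal_eval_eq_poorValue_of_isPoorElt hρ hS' hr₀] at hdf_iInf
    exact ENat.top_ne_natCast _ hdf_iInf
  simp only [vR_eq_addVal]
  tfae_have 1 ↔ 2 := by
    rw [hdf_iInf]
    exact poshR_eq_richSet_iff hρ hS' hh
  tfae_have 2 → 3 := fun h2 r r' hr hr' => (h2 r hr).trans (h2 r' hr').symm
  tfae_have 3 → 2 := fun h3 r hr => by rw [h3 r r₀ hr hr₀, hval₀, hdf_iInf]
  tfae_have 2 → 4 := fun h2 t => by
    obtain ⟨r, hr, hval⟩ := exists_isPoorElt_addVal_eval_eq_poorValue (h := h) hρ hS' t.2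
    rw [partitionMatrix_mulVec_eq_poorValue hρ hS' hm, Nat.cast_inj]
    exact_mod_cast (hval.symm.trans (h2 r hr)).trans hdf_mval
  tfae_have 4 → 2 := fun h4 r hr => by
    have hblock := h4 ⟨_, (block_spec hS' r).1⟩
    rw [partitionMatrix_mulVec_eq_poorValue hρ hS' hm, Nat.cast_inj] at hblock
    rw [addVal_eval_eq_poorValue_of_isPoorElt hρ hS' hr, hdf_mval, hblock]
  tfae_finish

/-- With `f = ∏_{s ∈ S}(x - s)^{h s}`, `S'` a balanced set associated to
`S`, `A` the partition matrix of `C_S` indexed by `S'`, `m t = ∑_{s ∈ S_t} h s`, and `d_f`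
a generator of the fixed divisor of `f`, the following are equivalent:
(i) `Posh(f)` equals the rich set of `S`;
(ii) `v (f r) = v d_f` for every `r` in an `S`-poor neighborhood;
(iii) `v (f r)` takes the same value for all `r` in `S`-poor neighborhoods;
(iv) `(m t)_{t ∈ S'}` solves `A · x = v d_f · (1, …, 1)ᵀ`. -/
theorem statement14 (R : Type*) [CommRing R] [IsDomain R] [IsDiscreteValuationRing R]
    [Finite (IsLocalRing.ResidueField R)]
    (S : Finset R) (hSne : S.Nonempty) (h : R → ℕ) (hh : ∀ s ∈ S, 0 < h s)
    (f : Polynomial R) (hfdef : f = ∏ s ∈ S, (Polynomial.X - Polynomial.C s) ^ h s)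
    (ρ : R → ℕ) (hρ : IsSPartition R S ρ)
    (S' : Finset R) (hS' : IsAssociatedBalancedSubset R S S' ρ)
    (m : R → ℕ)
    (hm : ∀ t ∈ S',
      m t = ∑ᶠ s ∈ {s : R | s ∈ S ∧ resClass R s (ρ s) = resClass R t (ρ t)}, h s)
    (df : R) (hdf : fixDiv R f = Ideal.span {df}) :
    List.TFAE [
      poshR R f = richSet R S ρ,
      ∀ r : R, IsPoorElt R S ρ r → vR R (f.eval r) = vR R df,
      ∀ r r' : R, IsPoorElt R S ρ r → IsPoorElt R S ρ r' →
        vR R (f.eval r) = vR R (f.eval r'),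
      ∀ t : {x // x ∈ S'},
        (∑ u : {x // x ∈ S'}, partitionMatrix R S' ρ t u * (m (u : R) : ℤ)) =
          (mval R df : ℤ)] :=
  statement14_general R S h hh f hfdef ρ hρ S' hS' m hm df hdf
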